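/- Let S ⊆ ℝⁿ×ℝᵖ be both sign-invariant and permutation-invariant with respect to x. Then conv(S) = {(x,z) : ∃ u, (u,z) ∈ conv(S₀) and u weakly submajorizes |x|}, where S₀ = S ∩ {(u,z) : u₁ ≥ ... ≥ uₙ ≥ 0}. -/

import Mathlib

open Finset

/-- The `i`-th largest entry (0-indexed) of the tuple `x`. -/
noncomputable def sortedDesc (n : ℕ) (x : Fin n → ℝ) : Fin n → ℝ :=
  fun i => x (Tuple.sort x i.rev)

/-- Sum of the `k` largest entries of `x`. -/
noncomputable def topSum (n : ℕ) (x : Fin n → ℝ) (k : ℕ) : ℝ :=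
  ∑ i ∈ Finset.univ.filter (fun i : Fin n => (i : ℕ) < k), sortedDesc n x i

/-- `u` majorizes `x`. -/
def Majorizes (n : ℕ) (u x : Fin n → ℝ) : Prop :=
  (∀ k, k < n → topSum n x k ≤ topSum n u k) ∧ (∑ i, x i = ∑ i, u i)

/-- `u` weakly submajorizes `x`. -/
def WeakSubmajorizes (n : ℕ) (u x : Fin n → ℝ) : Prop :=
  ∀ k, k ≤ n → topSum n x k ≤ topSum n u k

/-- Number of nonzero components. -/
noncomputable def suppCard (n : ℕ) (x : Fin n → ℝ) : ℕ :=
  (Finset.univ.filter (fun i => x i ≠ 0)).card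

/-! `⊆`: the right-hand side contains `S` (send `(x, z)` to the decreasing rearrangement of `|x|`,
which lies in `S` by invariance) and is convex, because `topSum n · k` is sublinear and is linear
on antitone vectors.

`⊇`: if `u` is antitone and `u ≥_wm |x|`, then `x` lies in the convex hull of the signed
permutations of `u`. Indeed, for every linear functional `c`,
`c ⬝ x ≤ ∑ sort|c| · sort|x| ≤ ∑ sort|c| · u`, by the rearrangement inequality and Abel summation,
and the last sum is `c ⬝ v` for a suitable signed permutation `v` of `u`. Signed permutations act
linearly on the `x`-coordinates and preserve `S`, so they map `(u, z) ∈ conv S` into `conv S`. -/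

section Sorting

variable {n : ℕ}

theorem exists_perm_sortedDesc_eq (x : Fin n → ℝ) :
    ∃ σ : Equiv.Perm (Fin n), sortedDesc n x = x ∘ σ :=
  ⟨Fin.revPerm.trans (Tuple.sort x), rfl⟩

theorem antitone_sortedDesc (x : Fin n → ℝ) : Antitone (sortedDesc n x) :=
  fun _ _ hij => Tuple.monotone_sort x (Fin.rev_le_rev.mpr hij)

theorem sortedDesc_eq_of_antitone_comp {x : Fin n → ℝ} (σ : Equiv.Perm (Fin n))
    (h : Antitone (x ∘ σ)) : sortedDesc n x = x ∘ σ := by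
  have hsort : x ∘ (Fin.revPerm.trans σ) = x ∘ Tuple.sort x :=
    Tuple.comp_sort_eq_comp_iff_monotone.mpr fun i j hij => h (Fin.rev_le_rev.mpr hij)
  funext i
  simpa [sortedDesc] using congrFun hsort.symm i.rev

theorem sortedDesc_of_antitone {x : Fin n → ℝ} (h : Antitone x) : sortedDesc n x = x :=
  sortedDesc_eq_of_antitone_comp 1 h

theorem sortedDesc_comp_perm (x : Fin n → ℝ) (σ : Equiv.Perm (Fin n)) :
    sortedDesc n (x ∘ σ) = sortedDesc n x := by
  obtain ⟨τ, hτ⟩ := exists_perm_sortedDesc_eq (x ∘ σ)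
  rw [hτ, sortedDesc_eq_of_antitone_comp (τ.trans σ) (hτ ▸ antitone_sortedDesc (x ∘ σ))]
  rfl

theorem sortedDesc_smul (x : Fin n → ℝ) {a : ℝ} (ha : 0 ≤ a) :
    sortedDesc n (a • x) = a • sortedDesc n x := by
  obtain ⟨σ, hσ⟩ := exists_perm_sortedDesc_eq x
  have hanti : Antitone ((a • x) ∘ σ) := (hσ ▸ antitone_sortedDesc x).const_mul ha
  rw [sortedDesc_eq_of_antitone_comp σ hanti, hσ]
  rfl

end Sorting

theorem Finset.sum_le_sum_of_card_eq_of_forall_le {ι M : Type*} [DecidableEq ι]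
    [AddCommMonoid M] [LinearOrder M] [IsOrderedAddMonoid M] {s t : Finset ι} {f : ι → M}
    (hst : #s = #t) (h : ∀ i ∈ s \ t, ∀ j ∈ t \ s, f i ≤ f j) :
    ∑ i ∈ s, f i ≤ ∑ i ∈ t, f i := by
  rw [← sum_inter_add_sum_sdiff s t, ← sum_inter_add_sum_sdiff t s, inter_comm]
  gcongr _ + ?_
  rcases (s \ t).eq_empty_or_nonempty with hempty | hne
  · have : t \ s = ∅ := by rw [← card_eq_zero, ← card_sdiff_comm hst, hempty, card_empty]
    simp [hempty, this]
  · obtain ⟨i₀, hi₀, hmax⟩ := exists_max_image (s \ t) f hne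
    calc ∑ i ∈ s \ t, f i ≤ #(s \ t) • f i₀ := sum_le_card_nsmul _ _ _ hmax
      _ = #(t \ s) • f i₀ := by rw [card_sdiff_comm hst]
      _ ≤ ∑ j ∈ t \ s, f j := card_nsmul_le_sum _ _ _ (h i₀ hi₀)

section TopSum

variable {n : ℕ}

theorem topSum_of_antitone {x : Fin n → ℝ} (h : Antitone x) (k : ℕ) :
    topSum n x k = ∑ i : Fin n with i.val < k, x i := by
  rw [topSum, sortedDesc_of_antitone h]

theorem topSum_comp_perm (x : Fin n → ℝ) (σ : Equiv.Perm (Fin n)) (k : ℕ) :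
    topSum n (x ∘ σ) k = topSum n x k := by
  rw [topSum, topSum, sortedDesc_comp_perm]

theorem topSum_sortedDesc (x : Fin n → ℝ) (k : ℕ) :
    topSum n (sortedDesc n x) k = topSum n x k := by
  obtain ⟨σ, hσ⟩ := exists_perm_sortedDesc_eq x
  rw [hσ, topSum_comp_perm]

theorem topSum_smul (x : Fin n → ℝ) {a : ℝ} (ha : 0 ≤ a) (k : ℕ) :
    topSum n (a • x) k = a * topSum n x k := by
  simp only [topSum, sortedDesc_smul x ha, Pi.smul_apply, smul_eq_mul, mul_sum]

theorem exists_sum_eq_topSum (x : Fin n → ℝ) {k : ℕ} (hk : k ≤ n) :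
    ∃ A : Finset (Fin n), #A = k ∧ topSum n x k = ∑ i ∈ A, x i ∧
      ∀ i ∉ A, ∀ j ∈ A, x i ≤ x j := by
  obtain ⟨σ, hσ⟩ := exists_perm_sortedDesc_eq x
  refine ⟨({i : Fin n | (i : ℕ) < k} : Finset (Fin n)).map σ.toEmbedding, ?_, ?_, ?_⟩
  · rw [card_map, Fin.card_filter_val_lt, min_eq_right hk]
  · rw [topSum, sum_map, hσ]
    rfl
  · intro i hi j hj
    simp only [mem_map, mem_filter, mem_univ, true_and, Equiv.coe_toEmbedding] at hi hj
    obtain ⟨b, hb, rfl⟩ := hj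
    have hle : b ≤ σ.symm i := Fin.le_def.mpr (hb.le.trans (not_lt.mp fun h => hi ⟨_, h, by simp⟩))
    simpa [hσ] using antitone_sortedDesc x hle

theorem sum_le_topSum (x : Fin n → ℝ) {A : Finset (Fin n)} {k : ℕ} (hA : #A = k) :
    ∑ i ∈ A, x i ≤ topSum n x k := by
  have hk : k ≤ n := hA ▸ (card_le_univ A).trans_eq (Fintype.card_fin n)
  obtain ⟨B, hB, hsum, hBtop⟩ := exists_sum_eq_topSum x hk
  rw [hsum]
  exact sum_le_sum_of_card_eq_of_forall_le (hA.trans hB.symm)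
    fun i hi j hj => hBtop i (mem_sdiff.1 hi).2 j (mem_sdiff.1 hj).1

theorem topSum_mono {x y : Fin n → ℝ} (h : x ≤ y) {k : ℕ} (hk : k ≤ n) :
    topSum n x k ≤ topSum n y k := by
  obtain ⟨A, hA, hsum, -⟩ := exists_sum_eq_topSum x hk
  rw [hsum]
  exact (sum_le_sum fun i _ => h i).trans (sum_le_topSum y hA)

theorem topSum_add_le (x y : Fin n → ℝ) {k : ℕ} (hk : k ≤ n) :
    topSum n (x + y) k ≤ topSum n x k + topSum n y k := by
  obtain ⟨A, hA, hsum, -⟩ := exists_sum_eq_topSum (x + y) hk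
  rw [hsum, Pi.add_def, sum_add_distrib]
  exact add_le_add (sum_le_topSum x hA) (sum_le_topSum y hA)

end TopSum

namespace WeakSubmajorizes

variable {n : ℕ}

theorem of_le {u w w' : Fin n → ℝ} (h : WeakSubmajorizes n u w) (hw : w' ≤ w) :
    WeakSubmajorizes n u w' :=
  fun k hk => (topSum_mono hw hk).trans (h k hk)

theorem add {u u' w w' : Fin n → ℝ} (hu : Antitone u) (hu' : Antitone u')
    (h : WeakSubmajorizes n u w) (h' : WeakSubmajorizes n u' w') :
    WeakSubmajorizes n (u + u') (w + w') := fun k hk =>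
  calc topSum n (w + w') k ≤ topSum n w k + topSum n w' k := topSum_add_le w w' hk
    _ ≤ topSum n u k + topSum n u' k := add_le_add (h k hk) (h' k hk)
    _ = topSum n (u + u') k := by
      rw [topSum_of_antitone hu, topSum_of_antitone hu',
        topSum_of_antitone (x := u + u') (hu.add hu'), ← sum_add_distrib]
      rfl

theorem smul {u w : Fin n → ℝ} (h : WeakSubmajorizes n u w) {a : ℝ} (ha : 0 ≤ a) :
    WeakSubmajorizes n (a • u) (a • w) := fun k hk => by
  rw [topSum_smul w ha, topSum_smul u ha]
  exact mul_le_mul_of_nonneg_left (h k hk) ha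

theorem sortedDesc_right {u w : Fin n → ℝ} (h : WeakSubmajorizes n u w) :
    WeakSubmajorizes n u (sortedDesc n w) := fun k hk => by
  rw [topSum_sortedDesc]
  exact h k hk

theorem smul_add_smul_abs {u u' x x' : Fin n → ℝ} (hu : Antitone u) (hu' : Antitone u')
    (h : WeakSubmajorizes n u fun i => |x i|) (h' : WeakSubmajorizes n u' fun i => |x' i|)
    {a b : ℝ} (ha : 0 ≤ a) (hb : 0 ≤ b) :
    WeakSubmajorizes n (a • u + b • u') fun i => |(a • x + b • x') i| := by
  refine ((h.smul ha).add (hu.const_mul ha) (hu'.const_mul hb) (h'.smul hb)).of_le fun i => ?_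
  simpa [abs_mul, abs_of_nonneg ha, abs_of_nonneg hb] using abs_add_le (a * x i) (b * x' i)

end WeakSubmajorizes

theorem weakSubmajorizes_sortedDesc {n : ℕ} (x : Fin n → ℝ) :
    WeakSubmajorizes n (sortedDesc n x) x := fun k _ => (topSum_sortedDesc x k).ge

theorem Finset.sum_range_mul_nonpos {R : Type*} [CommRing R] [LinearOrder R]
    [IsStrictOrderedRing R] {D a : ℕ → R} {n : ℕ} (hD : AntitoneOn D (Set.Iio n))
    (hD0 : ∀ i < n, 0 ≤ D i) (ha : ∀ k ≤ n, ∑ i ∈ range k, a i ≤ 0) :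
    ∑ i ∈ range n, D i * a i ≤ 0 := by
  rcases n.eq_zero_or_pos with rfl | hn
  · simp
  have hparts := sum_range_by_parts D a n
  simp only [smul_eq_mul] at hparts
  rw [hparts, sub_nonpos]
  calc D (n - 1) * ∑ i ∈ range n, a i ≤ 0 :=
        mul_nonpos_of_nonneg_of_nonpos (hD0 _ (by omega)) (ha n le_rfl)
    _ ≤ ∑ i ∈ range (n - 1), (D (i + 1) - D i) * ∑ j ∈ range (i + 1), a j := by
      refine sum_nonneg fun i hi => mul_nonneg_of_nonpos_of_nonpos ?_ (ha _ ?_)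
      · rw [mem_range] at hi
        exact sub_nonpos.2 (hD (Set.mem_Iio.2 (by omega)) (Set.mem_Iio.2 (by omega)) (by omega))
      · rw [mem_range] at hi
        omega

theorem Fin.sum_filter_val_lt_eq_sum_range {M : Type*} [AddCommMonoid M] {n : ℕ} (g : Fin n → M)
    {k : ℕ} (hk : k ≤ n) :
    ∑ i : Fin n with i.val < k, g i = ∑ m ∈ range k, if hm : m < n then g ⟨m, hm⟩ else 0 := by
  have hmap : ({i : Fin n | i.val < k} : Finset (Fin n)).map Fin.valEmbedding = range k := by
    ext m
    simp only [mem_map, mem_filter, mem_univ, true_and, Fin.valEmbedding_apply, mem_range]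
    exact ⟨fun ⟨i, hi, him⟩ => him ▸ hi, fun hm => ⟨⟨m, by omega⟩, hm, rfl⟩⟩
  rw [← hmap, sum_map]
  exact sum_congr rfl fun i _ => by simp

theorem WeakSubmajorizes.sum_mul_le_sum_mul {n : ℕ} {u w d : Fin n → ℝ}
    (h : WeakSubmajorizes n u w) (hu : Antitone u) (hw : Antitone w) (hd : Antitone d)
    (hd0 : ∀ i, 0 ≤ d i) : ∑ i, d i * w i ≤ ∑ i, d i * u i := by
  let extend : (Fin n → ℝ) → ℕ → ℝ := fun g m => if hm : m < n then g ⟨m, hm⟩ else 0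
  have hsum : ∑ i, d i * (w i - u i) = ∑ m ∈ range n, extend d m * extend (w - u) m := by
    rw [← Fin.sum_univ_eq_sum_range]
    simp [extend]
  have hnonpos : ∑ m ∈ range n, extend d m * extend (w - u) m ≤ 0 := by
    refine sum_range_mul_nonpos (fun i hi j hj hij => ?_) (fun i hi => ?_) (fun k hk => ?_)
    · simp only [extend, dif_pos (Set.mem_Iio.1 hi), dif_pos (Set.mem_Iio.1 hj)]
      exact hd (Fin.le_def.2 hij)
    · simp only [extend, dif_pos hi]
      exact hd0 _
    · rw [← Fin.sum_filter_val_lt_eq_sum_range _ hk, Pi.sub_def, sum_sub_distrib, sub_nonpos,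
        ← topSum_of_antitone hw, ← topSum_of_antitone hu]
      exact h k hk
  have hdiff : ∑ i, d i * w i - ∑ i, d i * u i = ∑ i, d i * (w i - u i) := by
    rw [← sum_sub_distrib]
    simp only [mul_sub]
  linarith

theorem sum_mul_le_sum_sortedDesc_mul {n : ℕ} (a b : Fin n → ℝ) :
    ∑ i, a i * b i ≤ ∑ i, sortedDesc n a i * sortedDesc n b i := by
  obtain ⟨π, hπ⟩ := exists_perm_sortedDesc_eq a
  obtain ⟨ρ, hρ⟩ := exists_perm_sortedDesc_eq b
  have hmono : Monovary (sortedDesc n a) (sortedDesc n b) :=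
    (antitone_sortedDesc a).monovary (antitone_sortedDesc b)
  calc ∑ i, a i * b i = ∑ i, sortedDesc n a i * sortedDesc n b ((π.trans ρ.symm) i) := by
        rw [← Equiv.sum_comp π, hπ, hρ]
        simp
    _ ≤ ∑ i, sortedDesc n a i * sortedDesc n b i := hmono.sum_mul_comp_perm_le_sum_mul

def signedPermutations (n : ℕ) (u : Fin n → ℝ) : Set (Fin n → ℝ) :=
  {v | ∃ (σ : Equiv.Perm (Fin n)) (ε : Fin n → ℝ), (∀ i, |ε i| = 1) ∧ v = fun i => ε i * u (σ i)}

section SignedPermutations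

variable {n : ℕ}

theorem finite_signedPermutations (u : Fin n → ℝ) : (signedPermutations n u).Finite := by
  refine (Set.Finite.pi (t := fun _ => Set.range u ∪ Set.range (-u))
    fun _ => (Set.finite_range u).union (Set.finite_range _)).subset ?_
  rintro v ⟨σ, ε, hε, rfl⟩ i -
  rcases (abs_eq zero_le_one).1 (hε i) with h | h
  · exact Or.inl ⟨σ i, by simp [h]⟩
  · exact Or.inr ⟨σ i, by simp [h]⟩

theorem exists_mem_signedPermutations_sum_mul_le {u x : Fin n → ℝ} (hu : Antitone u)
    (h : WeakSubmajorizes n u fun i => |x i|) (c : Fin n → ℝ) :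
    ∃ v ∈ signedPermutations n u, ∑ i, c i * x i ≤ ∑ i, c i * v i := by
  obtain ⟨π, hπ⟩ := exists_perm_sortedDesc_eq fun i => |c i|
  let ε : Fin n → ℝ := fun i => if 0 ≤ c i then 1 else -1
  have hcε : ∀ i, c i * ε i = |c i| := fun i => by
    by_cases hc : 0 ≤ c i
    · simp [ε, hc, abs_of_nonneg hc]
    · simp [ε, hc, abs_of_neg (not_le.1 hc)]
  have hε : ∀ i, |ε i| = 1 := fun i => by by_cases hc : 0 ≤ c i <;> simp [ε, hc]
  refine ⟨fun i => ε i * u (π.symm i), ⟨π.symm, ε, hε, rfl⟩, ?_⟩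
  calc ∑ i, c i * x i ≤ ∑ i, |c i| * |x i| :=
        sum_le_sum fun i _ => (le_abs_self _).trans (abs_mul _ _).le
    _ ≤ ∑ i, sortedDesc n (fun i => |c i|) i * sortedDesc n (fun i => |x i|) i :=
        sum_mul_le_sum_sortedDesc_mul _ _
    _ ≤ ∑ i, sortedDesc n (fun i => |c i|) i * u i :=
        h.sortedDesc_right.sum_mul_le_sum_mul hu (antitone_sortedDesc _) (antitone_sortedDesc _)
          fun i => hπ ▸ abs_nonneg _
    _ = ∑ i, c i * (ε i * u (π.symm i)) := by
        rw [hπ, ← Equiv.sum_comp π.symm]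
        simp [← mul_assoc, hcε]

theorem mem_convexHull_signedPermutations {u x : Fin n → ℝ} (hu : Antitone u)
    (h : WeakSubmajorizes n u fun i => |x i|) :
    x ∈ convexHull ℝ (signedPermutations n u) := by
  have hclosed : IsClosed (convexHull ℝ (signedPermutations n u)) :=
    ((finite_signedPermutations u).isCompact_convexHull (𝕜 := ℝ)).isClosed
  rw [← iInter_halfSpaces_eq (convex_convexHull ℝ _) hclosed, Set.mem_iInter]
  intro l
  have hl : ∀ y, l y = ∑ i, l (fun j => if i = j then 1 else 0) * y i := fun y => by
    simpa [mul_comm] using LinearMap.pi_apply_eq_sum_univ (l : (Fin n → ℝ) →ₗ[ℝ] ℝ) y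
  obtain ⟨v, hv, hle⟩ := exists_mem_signedPermutations_sum_mul_le hu h _
  exact ⟨v, subset_convexHull ℝ _ hv, by rwa [hl x, hl v]⟩

end SignedPermutations

theorem convex_setOf_antitone_fst {ι F : Type*} [Preorder ι] [AddCommGroup F] [Module ℝ F] :
    Convex ℝ {r : (ι → ℝ) × F | Antitone r.1} := by
  intro r hr r' hr' a b ha hb _ i j hij
  simp only [Prod.fst_add, Prod.smul_fst, Pi.add_apply, Pi.smul_apply, smul_eq_mul]
  exact add_le_add (mul_le_mul_of_nonneg_left (hr hij) ha) (mul_le_mul_of_nonneg_left (hr' hij) hb)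

theorem convex_setOf_exists_weakSubmajorizes {n p : ℕ}
    {C : Set ((Fin n → ℝ) × (Fin p → ℝ))} (hC : Convex ℝ C) (hanti : ∀ r ∈ C, Antitone r.1) :
    Convex ℝ {q : (Fin n → ℝ) × (Fin p → ℝ) | ∃ u : Fin n → ℝ,
      (u, q.2) ∈ C ∧ WeakSubmajorizes n u fun i => |q.1 i|} := by
  rintro ⟨x, z⟩ ⟨u, hu, hxu⟩ ⟨x', z'⟩ ⟨u', hu', hxu'⟩ a b ha hb hab
  refine ⟨a • u + b • u', by simpa using hC hu hu' ha hb hab, ?_⟩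
  exact hxu.smul_add_smul_abs (hanti _ hu) (hanti _ hu') hxu' ha hb

theorem mk_mem_convexHull_of_mem_signedPermutations {n p : ℕ}
    {S : Set ((Fin n → ℝ) × (Fin p → ℝ))}
    (hSperm : ∀ x z, (x, z) ∈ S → ∀ σ : Equiv.Perm (Fin n), (x ∘ σ, z) ∈ S)
    (hSsign : ∀ x z, (x, z) ∈ S → ∀ x' : Fin n → ℝ, (∀ i, |x' i| = |x i|) → (x', z) ∈ S)
    {u v : Fin n → ℝ} {z : Fin p → ℝ} (huz : (u, z) ∈ convexHull ℝ S)
    (hv : v ∈ signedPermutations n u) : (v, z) ∈ convexHull ℝ S := by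
  obtain ⟨σ, ε, hε, rfl⟩ := hv
  let Φ : (Fin n → ℝ) × (Fin p → ℝ) →ₗ[ℝ] (Fin n → ℝ) × (Fin p → ℝ) :=
    (LinearMap.pi fun i => ε i • LinearMap.proj (σ i)).prodMap LinearMap.id
  have hΦS : Φ '' S ⊆ S := by
    rintro _ ⟨⟨x, z⟩, hxz, rfl⟩
    exact hSsign _ z (hSperm x z hxz σ) _ fun i => by simp [abs_mul, hε]
  have hΦ : Φ '' convexHull ℝ S ⊆ convexHull ℝ S := by
    rw [Φ.image_convexHull]
    exact convexHull_mono hΦS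
  exact hΦ ⟨(u, z), huz, by ext i <;> simp [Φ]⟩

theorem convexHull_sign_and_permutation_invariant (n p : ℕ)
    (S : Set ((Fin n → ℝ) × (Fin p → ℝ)))
    (hSperm : ∀ x z, (x, z) ∈ S → ∀ σ : Equiv.Perm (Fin n), (x ∘ σ, z) ∈ S)
    (hSsign : ∀ x z, (x, z) ∈ S → ∀ x' : Fin n → ℝ, (∀ i, |x' i| = |x i|) → (x', z) ∈ S) :
    convexHull ℝ S =
      {q : (Fin n → ℝ) × (Fin p → ℝ) | ∃ u : Fin n → ℝ,
        (u, q.2) ∈ convexHull ℝ (S ∩ {r | Antitone r.1 ∧ ∀ i, 0 ≤ r.1 i}) ∧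
        WeakSubmajorizes n u (fun i => |q.1 i|)} := by
  have hanti : ∀ r ∈ convexHull ℝ (S ∩ {r | Antitone r.1 ∧ ∀ i, 0 ≤ r.1 i}), Antitone r.1 :=
    fun r hr => convexHull_min (fun r hr => hr.2.1) convex_setOf_antitone_fst hr
  apply Set.Subset.antisymm
  · refine convexHull_min ?_ (convex_setOf_exists_weakSubmajorizes (convex_convexHull ℝ _) hanti)
    rintro ⟨x, z⟩ hxz
    obtain ⟨σ, hσ⟩ := exists_perm_sortedDesc_eq fun i => |x i|
    have hsorted : (sortedDesc n fun i => |x i|, z) ∈ S :=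
      hσ ▸ hSperm _ z (hSsign x z hxz _ fun i => abs_abs _) σ
    refine ⟨_, subset_convexHull ℝ _ ⟨hsorted, ?_, fun i => hσ ▸ abs_nonneg _⟩,
      weakSubmajorizes_sortedDesc _⟩
    exact antitone_sortedDesc fun i => |x i|
  · rintro ⟨x, z⟩ ⟨u, huz, hxu⟩
    have hx : (x, z) ∈ convexHull ℝ (signedPermutations n u ×ˢ {z}) := by
      rw [convexHull_prod, convexHull_singleton]
      exact ⟨mem_convexHull_signedPermutations (hanti _ huz) hxu, rfl⟩
    refine convexHull_min ?_ (convex_convexHull ℝ S) hx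
    rintro ⟨v, z'⟩ ⟨hv, rfl⟩
    exact mk_mem_convexHull_of_mem_signedPermutations hSperm hSsign
      (convexHull_mono Set.inter_subset_left huz) hv
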